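/- arXiv:2604.23876 — 2 statements merged into one kernel-verified Lean document; each statement's English description precedes it below -/
import Mathlib

section
/- Suppose F : ℝⁿ → ℝⁿ satisfies ⟪x, F(x)⟫ ≤ -α‖x‖² + β for all x, with α > 0, β ≥ 0, and x : ℝ → ℝⁿ is a differentiable solution of x'(t) = F(x(t)). If ‖x(0)‖² ≤ β/α + 1, then ‖x(t)‖² ≤ β/α + 1 for all t ≥ 0 (the ball {x : ‖x‖² ≤ β/α + 1} is positively invariant). -/
/-! Along a trajectory, `f = ‖x‖²` satisfies `f' = 2⟪x, F x⟫ ≤ -2α f + 2β`. Gronwall's inequality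
bounds `f t` by `R e^{-2αt} + (β/α)(1 - e^{-2αt})` with `R = β/α + 1`, a convex combination of `R`
and the smaller value `β/α`. -/

open Real

theorem gronwallBound_neg_le {a b R t : ℝ} (ha : 0 < a) (hR : b ≤ a * R) (ht : 0 ≤ t) :
    gronwallBound R (-a) b t ≤ R := by
  have hdecay : exp (-a * t) ≤ 1 := exp_le_one_iff.mpr (by nlinarith)
  have hRb : b / a ≤ R := (div_le_iff₀ ha).mpr (by linarith)
  calc gronwallBound R (-a) b t = R - (R - b / a) * (1 - exp (-a * t)) := by
        rw [gronwallBound_of_K_ne_0 (neg_ne_zero.mpr ha.ne')]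
        field_simp
        ring
    _ ≤ R := sub_le_self _ (mul_nonneg (sub_nonneg.mpr hRb) (sub_nonneg.mpr hdecay))

theorem le_of_hasDerivAt_le_neg_mul_add {f f' : ℝ → ℝ} {a b R t : ℝ} (ha : 0 < a)
    (hR : b ≤ a * R) (hf : ∀ s, HasDerivAt f (f' s) s) (bound : ∀ s, f' s ≤ -a * f s + b)
    (h0 : f 0 ≤ R) (ht : 0 ≤ t) : f t ≤ R := by
  have hgronwall := le_gronwallBound_of_liminf_deriv_right_le
    (fun s _ => (hf s).continuousAt.continuousWithinAt)
    (fun s _ r hr => (hf s).hasDerivWithinAt.liminf_right_slope_le hr) h0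
    (fun s _ => bound s) t ⟨ht, le_rfl⟩
  rw [sub_zero] at hgronwall
  exact hgronwall.trans (gronwallBound_neg_le ha hR ht)

theorem ball_positively_invariant_general
    (n : ℕ) (F : EuclideanSpace ℝ (Fin n) → EuclideanSpace ℝ (Fin n))
    (α β : ℝ) (hα : 0 < α)
    (hdiss : ∀ x : EuclideanSpace ℝ (Fin n),
      inner ℝ x (F x) ≤ -α * ‖x‖ ^ 2 + β)
    (x : ℝ → EuclideanSpace ℝ (Fin n))
    (hx : ∀ t : ℝ, HasDerivAt x (F (x t)) t)
    (h0 : ‖x 0‖ ^ 2 ≤ β / α + 1) :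
    ∀ t ≥ (0:ℝ), ‖x t‖ ^ 2 ≤ β / α + 1 := by
  intro t ht
  have hradius : 2 * β ≤ 2 * α * (β / α + 1) := by
    rw [mul_add, mul_assoc, mul_div_cancel₀ β hα.ne']
    linarith
  exact le_of_hasDerivAt_le_neg_mul_add (f := (‖x ·‖ ^ 2)) (by positivity) hradius
    (fun s => (hx s).norm_sq) (fun s => by linarith [hdiss (x s)]) h0 ht

theorem ball_positively_invariant
    (n : ℕ) (F : EuclideanSpace ℝ (Fin n) → EuclideanSpace ℝ (Fin n))
    (α β : ℝ) (hα : 0 < α) (hβ : 0 ≤ β)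
    (hdiss : ∀ x : EuclideanSpace ℝ (Fin n),
      inner ℝ x (F x) ≤ -α * ‖x‖ ^ 2 + β)
    (x : ℝ → EuclideanSpace ℝ (Fin n))
    (hx : ∀ t : ℝ, HasDerivAt x (F (x t)) t)
    (h0 : ‖x 0‖ ^ 2 ≤ β / α + 1) :
    ∀ t ≥ (0:ℝ), ‖x t‖ ^ 2 ≤ β / α + 1 :=
  ball_positively_invariant_general n F α β hα hdiss x hx h0
end

section
/- Under the dissipativity hypothesis x·F(x) ≤ -α‖x‖² + β (α > 0, β ≥ 0), if a solution x(t) of x' = F(x) has V(0) = ‖x(0)‖² > ρ + ε where ρ = β/α and ε > 0, then V(t) ≤ ρ + ε for all t ≥ T, where T = (1/(2α))·ln((V(0) - ρ)/ε). -/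
open Real

/-!
Along a solution, `V = ‖x‖²` satisfies `V' = 2⟪x, F x⟫ ≤ -2α (V - β/α)`, so the weighted gap
`(V t - β/α) e^{2αt}` is nonincreasing. Hence `V t ≤ β/α + (V 0 - β/α) e^{-2αt}` for `t ≥ 0`,
and the decaying term is at most `ε` from the entry time `T` on; `T > 0` because `V 0 - β/α > ε`.
-/

theorem le_add_sub_mul_exp_of_hasDerivAt_le {V V' : ℝ → ℝ} {k ρ : ℝ}
    (hV : ∀ s, HasDerivAt V (V' s) s) (hV' : ∀ s, V' s ≤ -k * (V s - ρ))
    {t : ℝ} (ht : 0 ≤ t) :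
    V t ≤ ρ + (V 0 - ρ) * exp (-k * t) := by
  have hderiv : ∀ s, HasDerivAt (fun s => (V s - ρ) * exp (k * s))
      ((V' s + k * (V s - ρ)) * exp (k * s)) s := fun s =>
    (((hV s).sub_const ρ).mul (((hasDerivAt_id' s).const_mul k).exp)).congr_deriv (by ring)
  have hgap : Antitone fun s => (V s - ρ) * exp (k * s) :=
    antitone_of_hasDerivAt_nonpos hderiv fun s =>
      mul_nonpos_of_nonpos_of_nonneg (by linarith [hV' s]) (exp_pos _).le
  have hgap_t : V t - ρ ≤ (V 0 - ρ) * exp (-k * t) := by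
    rw [neg_mul, exp_neg, ← div_eq_mul_inv, le_div_iff₀ (exp_pos _)]
    simpa using hgap ht
  linarith

theorem mul_exp_neg_le_of_log_div_le {a ε k t : ℝ} (ha : 0 < a) (hε : 0 < ε) (hk : 0 < k)
    (ht : 1 / k * log (a / ε) ≤ t) :
    a * exp (-k * t) ≤ ε := by
  have hlog : log (a / ε) ≤ k * t := by
    rwa [one_div_mul_eq_div, div_le_iff₀ hk, mul_comm] at ht
  calc a * exp (-k * t) ≤ a * exp (-log (a / ε)) := by gcongr; linarith
    _ = ε := by rw [exp_neg, exp_log (by positivity)]; field_simp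

theorem norm_sq_le_of_dissipative {E : Type*} [NormedAddCommGroup E] [InnerProductSpace ℝ E]
    {F : E → E} {α β : ℝ} (hα : α ≠ 0) (hdiss : ∀ y, inner ℝ y (F y) ≤ -α * ‖y‖ ^ 2 + β)
    {x : ℝ → E} (hx : ∀ t, HasDerivAt x (F (x t)) t) {t : ℝ} (ht : 0 ≤ t) :
    ‖x t‖ ^ 2 ≤ β / α + (‖x 0‖ ^ 2 - β / α) * exp (-(2 * α) * t) := by
  refine le_add_sub_mul_exp_of_hasDerivAt_le (fun s => (hx s).norm_sq) (fun s => ?_) ht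
  have hrhs : -(2 * α) * (‖x s‖ ^ 2 - β / α) = 2 * (-α * ‖x s‖ ^ 2 + β) := by field_simp; ring
  rw [hrhs]
  linarith [hdiss (x s)]

theorem absorbing_ball_entry_time_general
    (n : ℕ) (F : EuclideanSpace ℝ (Fin n) → EuclideanSpace ℝ (Fin n))
    (α β : ℝ) (hα : 0 < α)
    (hdiss : ∀ x : EuclideanSpace ℝ (Fin n),
      inner ℝ x (F x) ≤ -α * ‖x‖ ^ 2 + β)
    (x : ℝ → EuclideanSpace ℝ (Fin n))
    (hx : ∀ t : ℝ, HasDerivAt x (F (x t)) t)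
    (ε : ℝ) (hε : 0 < ε)
    (h0 : ‖x 0‖ ^ 2 > β / α + ε) :
    ∀ t ≥ (1 / (2 * α)) * Real.log ((‖x 0‖ ^ 2 - β / α) / ε),
      ‖x t‖ ^ 2 ≤ β / α + ε := by
  intro t ht
  have hgap : ε < ‖x 0‖ ^ 2 - β / α := by linarith
  have hT : 0 < 1 / (2 * α) * log ((‖x 0‖ ^ 2 - β / α) / ε) :=
    mul_pos (by positivity) (log_pos ((one_lt_div hε).mpr hgap))
  have hdecay := mul_exp_neg_le_of_log_div_le (hε.trans hgap) hε (by positivity) ht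
  linarith [norm_sq_le_of_dissipative hα.ne' hdiss hx (hT.le.trans ht)]

theorem absorbing_ball_entry_time
    (n : ℕ) (F : EuclideanSpace ℝ (Fin n) → EuclideanSpace ℝ (Fin n))
    (α β : ℝ) (hα : 0 < α) (hβ : 0 ≤ β)
    (hdiss : ∀ x : EuclideanSpace ℝ (Fin n),
      inner ℝ x (F x) ≤ -α * ‖x‖ ^ 2 + β)
    (x : ℝ → EuclideanSpace ℝ (Fin n))
    (hx : ∀ t : ℝ, HasDerivAt x (F (x t)) t)
    (ε : ℝ) (hε : 0 < ε)
    (h0 : ‖x 0‖ ^ 2 > β / α + ε) :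
    ∀ t ≥ (1 / (2 * α)) * Real.log ((‖x 0‖ ^ 2 - β / α) / ε),
      ‖x t‖ ^ 2 ≤ β / α + ε :=
  absorbing_ball_entry_time_general n F α β hα hdiss x hx ε hε h0
end
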